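/- Let C be a convex corner on Herm(A) with dim A > 1. A supporting hyperplane defining a facet of C cannot pass through the origin; hence every facet can be written as F = {X ∈ C : Tr(XY) = 1} for some Y. -/

import Mathlib

/-!
If the hyperplane passed through the origin, the facet `F = {X ∈ C | Tr(XY) = 0}` would be a
nonempty convex hereditary set of positive semidefinite matrices spanning a subspace of dimension
`n² - 1` of the `n²`-dimensional real space of Hermitian matrices. Either all of `F` kills a
common vector `v ≠ 0`; then `span F` meets the plane spanned by `1` and `u v* + v u*` (with
`u ⊥ v`) trivially, so its dimension is at most `n² - 2`. Or the centroid of a finite spanning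
subset of `F` is positive definite; then heredity forces `span F` to be all Hermitian matrices.
So `α > 0`, and `Y' = α⁻¹ Y` describes the same facet.
-/
open Matrix
open scoped ComplexOrder

/-- A convex corner: a nonempty closed convex hereditary subset of the PSD cone. -/
def IsConvexCorner {n : ℕ} (C : Set (Matrix (Fin n) (Fin n) ℂ)) : Prop :=
  C.Nonempty ∧ IsClosed C ∧ Convex ℝ C ∧ (∀ A ∈ C, A.PosSemidef) ∧
    ∀ A ∈ C, ∀ B : Matrix (Fin n) (Fin n) ℂ, B.PosSemidef → (A - B).PosSemidef → B ∈ C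

/-- The anti-blocker `X♯ = {B ≥ 0 : Tr(AB) ≤ 1 for all A ∈ X}`. -/
def antiBlocker {n : ℕ} (C : Set (Matrix (Fin n) (Fin n) ℂ)) :
    Set (Matrix (Fin n) (Fin n) ℂ) :=
  {B | B.PosSemidef ∧ ∀ A ∈ C, ((A * B).trace).re ≤ 1}

open Module Submodule

theorem two_mul_finrank_selfAdjoint {A : Type*} [AddCommGroup A] [Module ℂ A] [StarAddMonoid A]
    [StarModule ℂ A] [FiniteDimensional ℝ A] :
    2 * finrank ℝ (selfAdjoint.submodule ℝ A) = finrank ℝ A := by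
  have h := (imaginaryPart (A := A)).finrank_range_add_finrank_ker
  rw [LinearMap.range_eq_top.mpr imaginaryPart_surjective, finrank_top, ker_imaginaryPart] at h
  rw [← h, two_mul]
  rfl

theorem direction_affineSpan_eq_span_of_zero_mem {k V : Type*} [Ring k]
    [AddCommGroup V] [Module k V] {s : Set V} (h0 : (0 : V) ∈ s) :
    (affineSpan k s).direction = span k s := by
  rw [direction_affineSpan, vectorSpan_eq_span_vsub_set_right k h0]
  simp

namespace Matrix

variable {ι : Type*} [Fintype ι]

theorem finrank_selfAdjoint :
    finrank ℝ (selfAdjoint.submodule ℝ (Matrix ι ι ℂ)) = Fintype.card ι ^ 2 := by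
  have h := two_mul_finrank_selfAdjoint (A := Matrix ι ι ℂ)
  rw [finrank_matrix, Complex.finrank_real_complex] at h
  rw [sq]; omega

theorem isLinearMap_re_trace_mul (Y : Matrix ι ι ℂ) :
    IsLinearMap ℝ fun X : Matrix ι ι ℂ => ((X * Y).trace).re :=
  ⟨fun X Z => by rw [add_mul, trace_add, Complex.add_re],
   fun r X => by rw [smul_mul_assoc, trace_smul, Complex.smul_re, smul_eq_mul]⟩

theorem re_trace_mul_smul (X Y : Matrix ι ι ℂ) (r : ℝ) :
    ((X * (r • Y)).trace).re = r * ((X * Y).trace).re := by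
  rw [mul_smul_comm, trace_smul, Complex.smul_re, smul_eq_mul]

theorem mulVec_eq_zero_of_mem_span {F : Set (Matrix ι ι ℂ)} {v : ι → ℂ}
    (hF : ∀ X ∈ F, X *ᵥ v = 0) {X : Matrix ι ι ℂ} (hX : X ∈ span ℝ F) : X *ᵥ v = 0 := by
  induction hX using span_induction with
  | mem X hX => exact hF X hX
  | zero => exact zero_mulVec v
  | add X Y _ _ hX hY => rw [add_mulVec, hX, hY, add_zero]
  | smul a X _ hX => rw [smul_mulVec, hX, smul_zero]

def IsHereditary (F : Set (Matrix ι ι ℂ)) : Prop :=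
  ∀ X ∈ F, ∀ B : Matrix ι ι ℂ, B.PosSemidef → (X - B).PosSemidef → B ∈ F

theorem IsHereditary.sep_re_trace_mul_eq_zero {C : Set (Matrix ι ι ℂ)} (hC : IsHereditary C)
    {Y : Matrix ι ι ℂ} (hY : ∀ X ∈ C, ((X * Y).trace).re ≤ 0) :
    IsHereditary {X ∈ C | ((X * Y).trace).re = 0} := by
  intro X ⟨hXC, hXY⟩ B hB hXB
  have hBC := hC X hXC B hB hXB
  have hsplit : ((X * Y).trace).re = ((B * Y).trace).re + (((X - B) * Y).trace).re := by
    rw [sub_mul, trace_sub, Complex.sub_re, add_sub_cancel]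
  have := hY B hBC
  have := hY _ (hC X hXC _ hXB (by rwa [sub_sub_cancel]))
  exact ⟨hBC, by linarith⟩

variable [DecidableEq ι]

open scoped MatrixOrder in
theorem PosDef.exists_posSemidef_add_smul_and_sub_smul [Nonempty ι] {A Z : Matrix ι ι ℂ}
    (hA : A.PosDef) (hZ : Z.IsHermitian) :
    ∃ ε : ℝ, 0 < ε ∧ (A + ε • Z).PosSemidef ∧ (A - ε • Z).PosSemidef := by
  obtain ⟨r, hr, hrA⟩ := (CFC.exists_pos_algebraMap_le_iff hA.isHermitian.isSelfAdjoint).2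
    fun _ hx => hA.isStrictlyPositive.spectrum_pos hx
  obtain ⟨M, hM⟩ := ((finite_real_spectrum (A := Z)).image abs).bddAbove
  have hK : 0 < |M| + 1 := by positivity
  have hspec : ∀ x ∈ spectrum ℝ Z, |x| ≤ |M| + 1 := fun x hx =>
    (hM ⟨x, hx, rfl⟩).trans ((le_abs_self M).trans (le_add_of_nonneg_right zero_le_one))
  have hZle : Z ≤ algebraMap ℝ _ (|M| + 1) :=
    le_algebraMap_of_spectrum_le (fun x hx => (abs_le.mp (hspec x hx)).2) hZ.isSelfAdjoint
  have hleZ : algebraMap ℝ _ (-(|M| + 1)) ≤ Z :=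
    algebraMap_le_of_le_spectrum (fun x hx => (abs_le.mp (hspec x hx)).1) hZ.isSelfAdjoint
  set ε := r / (|M| + 1)
  have hε : 0 < ε := div_pos hr hK
  have hcancel : algebraMap ℝ (Matrix ι ι ℂ) r - ε • algebraMap ℝ _ (|M| + 1) = 0 := by
    rw [Algebra.smul_def, ← map_mul, div_mul_cancel₀ r hK.ne', sub_self]
  refine ⟨ε, hε, ?_, ?_⟩
  · rw [← nonneg_iff_posSemidef, ← hcancel, sub_eq_add_neg, ← smul_neg, ← map_neg]
    exact add_le_add hrA (smul_le_smul_of_nonneg_left hleZ hε.le)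
  · rw [← nonneg_iff_posSemidef, ← hcancel]
    exact sub_le_sub hrA (smul_le_smul_of_nonneg_left hZle hε.le)

theorem IsHereditary.selfAdjoint_le_span_of_posDef_mem [Nonempty ι] {F : Set (Matrix ι ι ℂ)}
    (hF : IsHereditary F) {A : Matrix ι ι ℂ} (hAF : A ∈ F) (hA : A.PosDef) :
    selfAdjoint.submodule ℝ (Matrix ι ι ℂ) ≤ span ℝ F := by
  intro Z hZ
  obtain ⟨ε, hε, hplus, hminus⟩ := hA.exists_posSemidef_add_smul_and_sub_smul hZ
  set B := (2⁻¹ : ℝ) • (A - ε • Z)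
  have hAB : A - B = (2⁻¹ : ℝ) • (A + ε • Z) := by module
  have hBF : B ∈ F := hF A hAF B (hminus.smul (by norm_num)) (hAB ▸ hplus.smul (by norm_num))
  have hεZ : ε • Z = A - (2 : ℝ) • B := by module
  rw [← inv_smul_smul₀ hε.ne' Z, hεZ]
  exact smul_mem _ _ (sub_mem (subset_span hAF) (smul_mem _ _ (subset_span hBF)))

theorem exists_le_selfAdjoint_finrank_eq_two_mulVec_injective [Nontrivial ι] {v : ι → ℂ}
    (hv : v ≠ 0) : ∃ U : Submodule ℝ (Matrix ι ι ℂ), U ≤ selfAdjoint.submodule ℝ _ ∧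
      finrank ℝ U = 2 ∧ ∀ X ∈ U, X *ᵥ v = 0 → X = 0 := by
  obtain ⟨u, hu, huv⟩ := exists_ne_zero_dotProduct_eq_zero (star v)
  have hvu : star v ⬝ᵥ u = 0 := by rw [dotProduct_comm, huv]
  have huv' : star u ⬝ᵥ v = 0 := by rw [star_dotProduct, hvu, star_zero]
  have hs : star v ⬝ᵥ v ≠ 0 := fun h => hv (dotProduct_star_self_eq_zero.mp h)
  set Z := vecMulVec u (star v) + vecMulVec v (star u)
  have hZ : Z.IsHermitian := by
    simp only [IsHermitian, Z, conjTranspose_add, conjTranspose_vecMulVec, star_star, add_comm]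
  have hZv : Z *ᵥ v = (star v ⬝ᵥ v) • u := by
    rw [add_mulVec, vecMulVec_mulVec, vecMulVec_mulVec, huv', op_smul_eq_smul, op_smul_eq_smul,
      zero_smul, add_zero]
  have hindep : ∀ a b : ℝ, (a • 1 + b • Z) *ᵥ v = 0 → a = 0 ∧ b = 0 := by
    intro a b h
    rw [add_mulVec, smul_mulVec, smul_mulVec, one_mulVec, hZv] at h
    have ha : (a : ℂ) * (star v ⬝ᵥ v) = 0 := by
      simpa [dotProduct_add, hvu, Complex.real_smul] using congrArg (star v ⬝ᵥ ·) h
    obtain rfl : a = 0 := by exact_mod_cast (mul_eq_zero.mp ha).resolve_right hs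
    rw [zero_smul, zero_add] at h
    exact ⟨rfl, (smul_eq_zero.mp h).resolve_right (smul_ne_zero hs hu)⟩
  refine ⟨span ℝ {1, Z}, span_le.mpr ?_, ?_, fun X hX hXv => ?_⟩
  · rintro X (rfl | rfl)
    exacts [isHermitian_one, hZ]
  · rw [← range_cons_cons_empty 1 Z ![]]
    refine (finrank_span_eq_card (LinearIndependent.pair_iff.mpr fun a b h => ?_)).trans
      (Fintype.card_fin 2)
    exact hindep a b (by rw [h, zero_mulVec])
  · obtain ⟨a, b, rfl⟩ := mem_span_pair.mp hX
    obtain ⟨rfl, rfl⟩ := hindep a b hXv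
    simp

theorem finrank_span_add_two_le_of_mulVec_eq_zero [Nontrivial ι] {v : ι → ℂ} (hv : v ≠ 0)
    {F : Set (Matrix ι ι ℂ)} (hF : ∀ X ∈ F, X.IsHermitian ∧ X *ᵥ v = 0) :
    finrank ℝ (span ℝ F) + 2 ≤ Fintype.card ι ^ 2 := by
  obtain ⟨U, hUH, hU, hUv⟩ := exists_le_selfAdjoint_finrank_eq_two_mulVec_injective hv
  have hdisj : span ℝ F ⊓ U = ⊥ := (Submodule.eq_bot_iff _).mpr fun X ⟨hXF, hXU⟩ =>
    hUv X hXU (mulVec_eq_zero_of_mem_span (fun X hX => (hF X hX).2) hXF)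
  have hle : span ℝ F ⊔ U ≤ selfAdjoint.submodule ℝ (Matrix ι ι ℂ) :=
    sup_le (span_le.mpr fun X hX => (hF X hX).1) hUH
  have hsum := finrank_sup_add_finrank_inf_eq (span ℝ F) U
  rw [hdisj, finrank_bot, add_zero, hU] at hsum
  have hmono := finrank_mono hle
  rw [finrank_selfAdjoint] at hmono
  omega

theorem _root_.Convex.exists_posDef_mem {F : Set (Matrix ι ι ℂ)} (hconv : Convex ℝ F)
    (hne : F.Nonempty) (hpsd : ∀ X ∈ F, X.PosSemidef)
    (hker : ∀ v ≠ 0, ∃ X ∈ F, X *ᵥ v ≠ 0) : ∃ X ∈ F, X.PosDef := by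
  obtain ⟨A, hA⟩ := hne
  obtain ⟨t, htF, -, hspan, -⟩ := exists_finset_span_eq_linearIndepOn ℝ F
  set s := insert A t
  have hsF : ∀ X ∈ s, X ∈ F := fun X hX => (Finset.mem_insert.mp hX).elim (· ▸ hA) (@htF X)
  have hcard : (0 : ℝ) < ∑ _ ∈ s, 1 := by simp [s]
  set X₀ := s.centerMass (fun _ => (1 : ℝ)) id
  have hX₀F : X₀ ∈ F := hconv.centerMass_mem (fun _ _ => zero_le_one) hcard hsF
  refine ⟨X₀, hX₀F, (hpsd X₀ hX₀F).posDef_iff_det_ne_zero.mpr fun hdet => ?_⟩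
  obtain ⟨v, hv, hX₀v⟩ := exists_mulVec_eq_zero_iff.mpr hdet
  have hzero : ∀ X ∈ s, star v ⬝ᵥ (X *ᵥ v) = 0 := by
    refine (Finset.sum_eq_zero_iff_of_nonneg fun X hX =>
      (hpsd X (hsF X hX)).dotProduct_mulVec_nonneg v).mp ?_
    have hX₀ : star v ⬝ᵥ (X₀ *ᵥ v) = (∑ _ ∈ s, (1 : ℝ))⁻¹ • ∑ X ∈ s, star v ⬝ᵥ (X *ᵥ v) := by
      simp [X₀, Finset.centerMass, smul_mulVec, sum_mulVec, dotProduct_sum]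
    rw [hX₀v, dotProduct_zero] at hX₀
    exact (smul_eq_zero.mp hX₀.symm).resolve_left (inv_ne_zero hcard.ne')
  obtain ⟨X, hXF, hXv⟩ := hker v hv
  refine hXv (mulVec_eq_zero_of_mem_span (F := t) (fun X hX => ?_) (hspan ▸ subset_span hXF))
  exact ((hpsd X (htF hX)).dotProduct_mulVec_zero_iff v).mp
    (hzero X (Finset.mem_insert_of_mem hX))

theorem IsHereditary.finrank_span_ne_card_sq_sub_one [Nontrivial ι] {F : Set (Matrix ι ι ℂ)}
    (hF : IsHereditary F) (hconv : Convex ℝ F) (hne : F.Nonempty) (hpsd : ∀ X ∈ F, X.PosSemidef) :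
    finrank ℝ (span ℝ F) ≠ Fintype.card ι ^ 2 - 1 := by
  have hcard : 0 < Fintype.card ι ^ 2 := by positivity
  by_cases hker : ∃ v ≠ 0, ∀ X ∈ F, X *ᵥ v = 0
  · obtain ⟨v, hv, hFv⟩ := hker
    have := finrank_span_add_two_le_of_mulVec_eq_zero hv fun X hX => ⟨(hpsd X hX).1, hFv X hX⟩
    omega
  · push Not at hker
    obtain ⟨A, hAF, hA⟩ := hconv.exists_posDef_mem hne hpsd hker
    have := finrank_mono (hF.selfAdjoint_le_span_of_posDef_mem hAF hA)
    rw [finrank_selfAdjoint] at this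
    omega

end Matrix

/-- For `dim A > 1`, a supporting hyperplane defining a facet of a
convex corner cannot pass through the origin; hence every facet can be written as
`F = {X ∈ C : Tr(XY') = 1}` for some `Y'` (also a supporting hyperplane). -/
theorem facet_hyperplane_not_through_origin {n : ℕ} (hn : 1 < n)
    (C : Set (Matrix (Fin n) (Fin n) ℂ)) (hC : IsConvexCorner C)
    (Y : Matrix (Fin n) (Fin n) ℂ) (hY : Y.IsHermitian)
    (α : ℝ) (hsupp : ∀ X ∈ C, ((X * Y).trace).re ≤ α)
    (hdim : Module.finrank ℝ
      (affineSpan ℝ {X ∈ C | ((X * Y).trace).re = α}).direction = n ^ 2 - 1) :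
    α ≠ 0 ∧ ∃ Y' : Matrix (Fin n) (Fin n) ℂ, Y'.IsHermitian ∧
      (∀ X ∈ C, ((X * Y').trace).re ≤ 1) ∧
      {X ∈ C | ((X * Y).trace).re = α} = {X ∈ C | ((X * Y').trace).re = 1} := by
  obtain ⟨⟨A, hA⟩, -, hconv, hpsd, hher⟩ := hC
  have h0 : (0 : Matrix (Fin n) (Fin n) ℂ) ∈ C := hher A hA 0 .zero (by simpa using hpsd A hA)
  have hα : 0 < α := by
    refine (by simpa using hsupp 0 h0 : (0 : ℝ) ≤ α).lt_of_ne fun hα => ?_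
    subst hα
    have : Nontrivial (Fin n) := Fin.nontrivial_iff_two_le.mpr hn
    have h0F : (0 : Matrix (Fin n) (Fin n) ℂ) ∈ {X ∈ C | ((X * Y).trace).re = 0} := ⟨h0, by simp⟩
    refine IsHereditary.finrank_span_ne_card_sq_sub_one
      (IsHereditary.sep_re_trace_mul_eq_zero hher hsupp)
      (hconv.inter (convex_hyperplane (isLinearMap_re_trace_mul Y) 0)) ⟨0, h0F⟩
      (fun X hX => hpsd X hX.1) ?_
    rw [← direction_affineSpan_eq_span_of_zero_mem h0F, hdim, Fintype.card_fin]
  refine ⟨hα.ne', α⁻¹ • Y, hY.smul (IsSelfAdjoint.all _), fun X hX => ?_, ?_⟩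
  · rw [re_trace_mul_smul, inv_mul_le_iff₀ hα, mul_one]
    exact hsupp X hX
  · ext X
    simp only [Set.mem_ofPred_eq, re_trace_mul_smul, inv_mul_eq_one₀ hα.ne', eq_comm]
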